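/- arXiv:math/0303283 — 4 statements merged into one kernel-verified Lean document; each statement's English description precedes it below -/
import Mathlib

section
/- Every finite chordal graph which is not complete admits at least two non-adjacent simplicial vertices. -/
def SimpleGraph.IsSimplicialVertex {V : Type*} (G : SimpleGraph V) (v : V) : Prop :=
  G.IsClique (G.neighborSet v)

def SimpleGraph.IsChordal {V : Type*} (G : SimpleGraph V) : Prop :=
  ∀ (v : V) (w : G.Walk v v), w.IsCycle → 4 ≤ w.length →
    ∃ a b, a ∈ w.support ∧ b ∈ w.support ∧ G.Adj a b ∧ s(a, b) ∉ w.edges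

def SimpleGraph.IsPEO {V : Type*} [Fintype V] (G : SimpleGraph V)
    (e : Fin (Fintype.card V) ≃ V) : Prop :=
  ∀ i : Fin (Fintype.card V),
    (G.induce {x | ∃ j, i ≤ j ∧ e j = x}).IsSimplicialVertex ⟨e i, ⟨i, le_refl i, rfl⟩⟩

/-!
Dirac's argument. Let `v` be a vertex with a non-neighbour `b`, let `C` be the component of
`G - N[v]` containing `b`, and let `S` be the set of neighbours of `v` having a neighbour in `C`.
Two non-adjacent `x, y ∈ S` would close, with `v` and a shortest `x`–`y` path through `C`, a
chordless cycle of length at least four; hence `S` is a clique. The chordal graph `G[C ∪ S]` misses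
`v`, so by induction it is complete or has two non-adjacent simplicial vertices, one of which lies
in `C`. As `N(C) ⊆ C ∪ S`, that vertex is simplicial in `G`, and it is not adjacent to `v`.
Applying this first to a non-adjacent pair `(a, b)` and then to the simplicial vertex found gives
two non-adjacent simplicial vertices.
-/

namespace SimpleGraph

variable {V : Type*} {G : SimpleGraph V}

namespace Walk

theorem exists_length_lt_of_isChord {u v : V} {p : G.Walk u v} {e : Sym2 V} (he : p.IsChord e) :
    ∃ q : G.Walk u v, q.length < p.length ∧ q.support ⊆ p.support := by
  induction e using Sym2.ind with
  | _ a b =>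
  obtain ⟨hab, hnot, ha, hb⟩ := isChord_sym2Mk.mp he
  obtain ⟨i, rfl, hi⟩ := mem_support_iff_exists_getVert.mp ha
  obtain ⟨j, rfl, hj⟩ := mem_support_iff_exists_getVert.mp hb
  clear he ha hb
  wlog hij : i < j generalizing i j
  · have hne : i ≠ j := fun h => hab.ne (h ▸ rfl)
    exact this j hj i hi hab.symm (Sym2.eq_swap (a := p.getVert j) ▸ hnot) (by omega)
  have hsucc : j ≠ i + 1 := by
    rintro rfl
    exact hnot ((mk_mem_edges_iff_exists p).mpr ⟨i, by omega, rfl⟩)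
  refine ⟨(p.take i).append (cons hab (p.drop j)), ?_, fun w hw => ?_⟩
  · simp only [length_append, take_length, length_cons, drop_length]
    omega
  · simp only [support_append, support_take, support_cons, List.tail_cons,
      drop_support_eq_support_drop_min, List.mem_append] at hw
    exact hw.elim List.mem_of_mem_take List.mem_of_mem_drop

theorem exists_isPath_isChordless {u v : V} (p : G.Walk u v) :
    ∃ q : G.Walk u v, q.IsPath ∧ q.IsChordless ∧ q.support ⊆ p.support := by
  classical
  induction hn : p.length using Nat.strong_induction_on generalizing p with
  | _ n ih =>
  by_cases hpath : p.IsPath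
  · by_cases hchordless : p.IsChordless
    · exact ⟨p, hpath, hchordless, List.Subset.refl _⟩
    obtain ⟨e, he⟩ : ∃ e, p.IsChord e := by
      simpa [IsChordless] using hchordless
    obtain ⟨q, hlt, hsub⟩ := exists_length_lt_of_isChord he
    obtain ⟨r, hr, hr', hrsub⟩ := ih _ (hn ▸ hlt) q rfl
    exact ⟨r, hr, hr', fun _ h => hsub (hrsub h)⟩
  · have hlt : p.bypass.length < p.length := by
      by_contra hle
      exact hpath (bypass_eq_self_of_length_le_length_bypass p (not_lt.mp hle) ▸ bypass_isPath p)
    obtain ⟨r, hr, hr', hrsub⟩ := ih _ (hn ▸ hlt) p.bypass rfl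
    exact ⟨r, hr, hr', fun _ h => support_bypass_subset_support p (hrsub h)⟩

end Walk

open Walk

def reachWithin (G : SimpleGraph V) (K : Set V) (b : V) : Set V :=
  {w | ∃ p : G.Walk b w, ∀ z ∈ p.support, z ∈ K}

section reachWithin

variable {K : Set V} {b c d w : V}

theorem self_mem_reachWithin (hb : b ∈ K) : b ∈ G.reachWithin K b :=
  ⟨nil, by simpa using hb⟩

theorem reachWithin_subset : G.reachWithin K b ⊆ K :=
  fun _ ⟨p, hp⟩ => hp _ p.end_mem_support

theorem mem_reachWithin_of_adj (hc : c ∈ G.reachWithin K b) (hcw : G.Adj c w) (hw : w ∈ K) :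
    w ∈ G.reachWithin K b := by
  obtain ⟨p, hp⟩ := hc
  refine ⟨p.concat hcw, fun z hz => ?_⟩
  simp only [support_concat, List.mem_append, List.mem_singleton] at hz
  exact hz.elim (hp z) (· ▸ hw)

theorem exists_walk_of_mem_reachWithin (hc : c ∈ G.reachWithin K b) (hd : d ∈ G.reachWithin K b) :
    ∃ p : G.Walk c d, ∀ z ∈ p.support, z ∈ K := by
  obtain ⟨p, hp⟩ := hc
  obtain ⟨q, hq⟩ := hd
  refine ⟨p.reverse.append q, fun z hz => ?_⟩
  rw [mem_support_append_iff, support_reverse, List.mem_reverse] at hz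
  exact hz.elim (hp z) (hq z)

end reachWithin

theorem IsSimplicialVertex.of_induce {T : Set V} {u : T} (hu : (G.induce T).IsSimplicialVertex u)
    (hN : G.neighborSet u ⊆ T) : G.IsSimplicialVertex u :=
  fun x hx y hy hxy =>
    hu (x := ⟨x, hN hx⟩) (y := ⟨y, hN hy⟩) hx hy fun h => hxy (congrArg Subtype.val h)

theorem exists_isSimplicialVertex_pair_of_forall
    (h : ∀ v b, b ≠ v → ¬G.Adj v b → ∃ u, G.IsSimplicialVertex u ∧ u ≠ v ∧ ¬G.Adj v u)
    (hG : ¬∀ u v : V, u ≠ v → G.Adj u v) :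
    ∃ u v, u ≠ v ∧ ¬G.Adj u v ∧ G.IsSimplicialVertex u ∧ G.IsSimplicialVertex v := by
  push Not at hG
  obtain ⟨a, b, hab, hnab⟩ := hG
  obtain ⟨u, hu, hua, hnau⟩ := h a b hab.symm hnab
  obtain ⟨w, hw, hwu, hnuw⟩ := h u a hua.symm (fun h => hnau h.symm)
  exact ⟨u, w, hwu.symm, hnuw, hu, hw⟩

namespace IsChordal

theorem induce (hG : G.IsChordal) (T : Set V) : (G.induce T).IsChordal := by
  intro v w hw hlen
  let f : G.induce T →g G := ⟨Subtype.val, id⟩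
  have hinj : Function.Injective f := Subtype.val_injective
  obtain ⟨a, b, ha, hb, hab, hne⟩ := hG v (w.map f) (hw.map hinj) (by rwa [length_map])
  rw [Walk.support_map] at ha hb
  obtain ⟨a', ha', rfl⟩ := List.mem_map.mp ha
  obtain ⟨b', hb', rfl⟩ := List.mem_map.mp hb
  refine ⟨a', b', ha', hb', hab, fun h => hne ?_⟩
  rw [Walk.edges_map]
  simpa using List.mem_map_of_mem (f := Sym2.map f) h

theorem adj_of_walk (hG : G.IsChordal) {v x y : V} (hx : G.Adj v x) (hy : G.Adj v y) (hxy : x ≠ y)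
    (q : G.Walk x y) (hq : ∀ w ∈ q.support, w = v ∨ G.Adj v w → w = x ∨ w = y) :
    G.Adj x y := by
  by_contra hnxy
  obtain ⟨p, hpath, hchordless, hsub⟩ := q.exists_isPath_isChordless
  have hp w (hw : w ∈ p.support) := hq w (hsub hw)
  have hvp : v ∉ p.support := fun hv => by
    rcases hp v hv (Or.inl rfl) with h | h
    exacts [hx.ne h, hy.ne h]
  have hlen : 2 ≤ p.length := by
    by_contra! h
    interval_cases hl : p.length
    · exact hxy (p.eq_of_length_eq_zero hl)
    · exact hnxy (p.adj_of_length_eq_one hl)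
  set c := cons hx (p.concat hy.symm)
  have hc : c.IsCycle := by
    refine (cons_isCycle_iff _ _).mpr ⟨hpath.concat hvp _, ?_⟩
    rw [edges_concat, List.concat_eq_append, List.mem_append, List.mem_singleton, not_or]
    exact ⟨fun h => hvp (p.fst_mem_support_of_mem_edges h), by simp [hxy, hx.ne']⟩
  obtain ⟨a, b, ha, hb, hab, hnot⟩ := hG v c hc (by simp only [c, length_cons, length_concat]; omega)
  have hmem : ∀ w ∈ c.support, w = v ∨ w ∈ p.support := fun w hw => by
    simpa [c, support_concat, or_comm] using hw
  have hvw : ∀ w ∈ p.support, G.Adj v w → s(v, w) ∈ c.edges := fun w hw hvw => by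
    rcases hp w hw (Or.inr hvw) with rfl | rfl <;> simp [c]
  rcases hmem a ha with rfl | hap <;> rcases hmem b hb with rfl | hbp
  · exact hab.ne rfl
  · exact hnot (hvw b hbp hab)
  · exact hnot (Sym2.eq_swap ▸ hvw a hap hab.symm)
  · exact hnot (by simp [c, hchordless.mem_edges hap hbp hab])

theorem isClique_adj_of_reachWithin (hG : G.IsChordal) (v b : V) :
    G.IsClique {s | G.Adj v s ∧ ∃ c ∈ G.reachWithin {z | z ≠ v ∧ ¬G.Adj v z} b, G.Adj c s} := by
  rintro x ⟨hvx, c, hc, hcx⟩ y ⟨hvy, d, hd, hdy⟩ hxy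
  obtain ⟨p, hp⟩ := exists_walk_of_mem_reachWithin hc hd
  refine hG.adj_of_walk hvx hvy hxy (cons hcx.symm (p.concat hdy)) fun w hw hwv => ?_
  simp only [support_cons, support_concat, List.mem_cons, List.mem_append, List.not_mem_nil,
    or_false] at hw
  rcases hw with rfl | hw | rfl
  · exact Or.inl rfl
  · exact absurd hwv (not_or.mpr (hp w hw))
  · exact Or.inr rfl

theorem exists_isSimplicialVertex_of_induce (hG : G.IsChordal) {v b : V} (hbv : b ≠ v)
    (hb : ¬G.Adj v b)
    (ih : ∀ T : Set V, v ∉ T → ∀ x y : T, y ≠ x → ¬(G.induce T).Adj x y →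
      ∃ u, (G.induce T).IsSimplicialVertex u ∧ u ≠ x ∧ ¬(G.induce T).Adj x u) :
    ∃ u, G.IsSimplicialVertex u ∧ u ≠ v ∧ ¬G.Adj v u := by
  set C := G.reachWithin {z | z ≠ v ∧ ¬G.Adj v z} b
  set S := {s | G.Adj v s ∧ ∃ c ∈ C, G.Adj c s}
  have hbC : b ∈ C := self_mem_reachWithin ⟨hbv, hb⟩
  have hCv : ∀ c ∈ C, c ≠ v ∧ ¬G.Adj v c := fun c hc =>
    (reachWithin_subset hc : c ∈ {z | z ≠ v ∧ ¬G.Adj v z})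
  have hCS : ∀ c ∈ C, G.neighborSet c ⊆ C ∪ S := by
    intro c hc w hcw
    by_cases hw : w ≠ v ∧ ¬G.Adj v w
    · exact Or.inl (mem_reachWithin_of_adj hc hcw hw)
    · have hvw : G.Adj v w := by
        by_contra hvw
        obtain rfl : w = v := by simpa [hvw] using hw
        exact (hCv c hc).2 hcw.symm
      exact Or.inr ⟨hvw, c, hc, hcw⟩
  have hvCS : v ∉ C ∪ S := by
    rintro (hv | hv)
    exacts [(hCv v hv).1 rfl, hv.1.ne rfl]
  have hlift : ∀ u : ↥(C ∪ S), ↑u ∈ C → (G.induce (C ∪ S)).IsSimplicialVertex u →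
      ∃ u, G.IsSimplicialVertex u ∧ u ≠ v ∧ ¬G.Adj v u :=
    fun u huC hu => ⟨u, hu.of_induce (hCS u huC), hCv u huC⟩
  by_cases hcomplete : ∀ x y : ↥(C ∪ S), x ≠ y → (G.induce (C ∪ S)).Adj x y
  · exact hlift ⟨b, Or.inl hbC⟩ hbC fun x _ y _ hxy => hcomplete x y hxy
  obtain ⟨x, y, hxy, hnxy, hx, hy⟩ :=
    exists_isSimplicialVertex_pair_of_forall (ih _ hvCS) hcomplete
  by_cases hxC : ↑x ∈ C
  · exact hlift x hxC hx
  by_cases hyC : ↑y ∈ C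
  · exact hlift y hyC hy
  exact absurd (hG.isClique_adj_of_reachWithin v b (x.2.resolve_left hxC)
    (y.2.resolve_left hyC) fun h => hxy (Subtype.ext h)) hnxy

theorem exists_isSimplicialVertex_ne_not_adj [Finite V] (hG : G.IsChordal) {v b : V} (hbv : b ≠ v) (hb : ¬G.Adj v b) :
    ∃ u, G.IsSimplicialVertex u ∧ u ≠ v ∧ ¬G.Adj v u := by
  induction hn : Nat.card V using Nat.strong_induction_on generalizing V with
  | _ n ih =>
  refine hG.exists_isSimplicialVertex_of_induce hbv hb fun T hvT x y hyx hxy => ?_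
  exact ih _ (hn ▸ Finite.card_subtype_lt hvT) (hG.induce T) hyx hxy rfl

end IsChordal

end SimpleGraph

theorem chordal_two_nonadjacent_simplicial {V : Type*} [Fintype V] (G : SimpleGraph V)
    (hG : G.IsChordal) (hnc : ¬ ∀ u v : V, u ≠ v → G.Adj u v) :
    ∃ u v : V, u ≠ v ∧ ¬ G.Adj u v ∧ G.IsSimplicialVertex u ∧ G.IsSimplicialVertex v :=
  G.exists_isSimplicialVertex_pair_of_forall
    (fun _ _ hbv hb => hG.exists_isSimplicialVertex_ne_not_adj hbv hb) hnc
end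

section
/- Let G = (V,E) be a finite graph and v a simplicial vertex. Define σ : X(G\v) → ℂ^V by σ(z)_u = z_u for u ≠ v and σ(z)_v = (1 + Σ_{u ∈ N(v)} |z_u|²)^{1/2}. Then σ maps X(G\v) into X(G), is continuous, and is a section of the restriction map X(G) → X(G\v). -/
/-- The complement of the graphical arrangement of `G`. -/
def arrComplement {V : Type*} (G : SimpleGraph V) : Set (V → ℂ) :=
  {z | ∀ ⦃i j : V⦄, G.Adj i j → z i ≠ z j}

/-- The Falk–Randell section `σ` of the restriction map `X(G) → X(G∖v)`. -/
noncomputable def frSection {V : Type*} [Fintype V] [DecidableEq V]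
    (G : SimpleGraph V) [DecidableRel G.Adj] (v : V)
    (z : {u : V // u ≠ v} → ℂ) : V → ℂ :=
  fun u =>
    if h : u = v then
      (Real.sqrt (1 + ∑ w ∈ (G.neighborFinset v).attach,
        ‖z ⟨w.1, ((G.mem_neighborFinset v w.1).mp w.2).ne'⟩‖ ^ 2) : ℂ)
    else z ⟨u, h⟩

lemma Complex.ne_ofReal_sqrt_one_add_of_norm_sq_le {c : ℂ} {S : ℝ} (h : ‖c‖ ^ 2 ≤ S) :
    c ≠ (√(1 + S) : ℂ) := by
  have hlt : ‖c‖ < ‖(√(1 + S) : ℂ)‖ := by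
    rw [Complex.norm_real, Real.norm_of_nonneg (Real.sqrt_nonneg _),
      Real.lt_sqrt (norm_nonneg _)]
    linarith
  exact fun he => hlt.ne (congrArg norm he)

section frSection

variable {V : Type*} [Fintype V] [DecidableEq V] (G : SimpleGraph V) [DecidableRel G.Adj]
  (v : V) (z : {u : V // u ≠ v} → ℂ)

lemma frSection_of_ne {u : V} (hu : u ≠ v) : frSection G v z u = z ⟨u, hu⟩ :=
  dif_neg hu

lemma frSection_ne_self_of_adj {j : V} (hj : G.Adj v j) :
    frSection G v z j ≠ frSection G v z v := by
  rw [frSection_of_ne G v z hj.ne', frSection, dif_pos rfl]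
  apply Complex.ne_ofReal_sqrt_one_add_of_norm_sq_le
  exact Finset.single_le_sum
    (f := fun w : G.neighborFinset v => ‖z ⟨w.1, ((G.mem_neighborFinset v w.1).mp w.2).ne'⟩‖ ^ 2)
    (fun _ _ => by positivity) (Finset.mem_attach _ ⟨j, (G.mem_neighborFinset v j).mpr hj⟩)

lemma frSection_mem_arrComplement (hz : z ∈ arrComplement (G.induce {u : V | u ≠ v})) :
    frSection G v z ∈ arrComplement G := by
  intro i j hij
  by_cases hi : i = v
  · subst hi
    exact (frSection_ne_self_of_adj G i z hij).symm
  by_cases hj : j = v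
  · subst hj
    exact frSection_ne_self_of_adj G j z hij.symm
  rw [frSection_of_ne G v z hi, frSection_of_ne G v z hj]
  exact hz (show (G.induce {u : V | u ≠ v}).Adj ⟨i, hi⟩ ⟨j, hj⟩ from hij)

lemma continuous_frSection : Continuous (frSection G v) := by
  refine continuous_pi fun u => ?_
  by_cases hu : u = v
  · subst hu
    simp only [frSection, dif_pos]
    fun_prop
  · simp only [frSection, dif_neg hu]
    exact continuous_apply _

lemma frSection_restrict : (fun u : {u : V // u ≠ v} => frSection G v z u.1) = z :=
  funext fun u => frSection_of_ne G v z u.2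

end frSection

theorem frSection_is_continuous_section_general {V : Type*} [Fintype V] [DecidableEq V]
    (G : SimpleGraph V) [DecidableRel G.Adj] (v : V) :
    (∀ z, z ∈ arrComplement (G.induce {u : V | u ≠ v}) →
        frSection G v z ∈ arrComplement G) ∧
    Continuous (frSection G v) ∧
    (∀ z : {u : V // u ≠ v} → ℂ,
        (fun u : {u : V // u ≠ v} => frSection G v z u.1) = z) :=
  ⟨frSection_mem_arrComplement G v, continuous_frSection G v, frSection_restrict G v⟩

theorem frSection_is_continuous_section {V : Type*} [Fintype V] [DecidableEq V]
    (G : SimpleGraph V) [DecidableRel G.Adj] (v : V) (hv : G.IsSimplicialVertex v) :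
    (∀ z, z ∈ arrComplement (G.induce {u : V | u ≠ v}) →
        frSection G v z ∈ arrComplement G) ∧
    Continuous (frSection G v) ∧
    (∀ z : {u : V // u ≠ v} → ℂ,
        (fun u : {u : V // u ≠ v} => frSection G v z u.1) = z) :=
  frSection_is_continuous_section_general G v
end

section
/- Let S be a finite poset, F a contravariant functor from S to groups, s₀ a maximal element of S, and T a subset of the cone C(s₀) = { t ≤ s₀ | ∀u ∈ S, t ≤ u ⇒ u ≤ s₀ } with s₀ ∈ T. Writing D(s₀) = { t | t ≤ s₀ }, the group lim_S F is isomorphic to the pull-back (fiber product) of the diagram F(s₀) → lim_{D(s₀)\T} F ← lim_{S\T} F, where the maps are induced by the restriction homomorphisms and the limit projections. -/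
section

variable {α : Type*} [Fintype α] [PartialOrder α]
  (F : α → Type*) [∀ s, Group (F s)]
  (ρ : ∀ t s : α, t ≤ s → (F s →* F t))

/-- The limit of the contravariant functor `F` over the whole poset. -/
def fullLimit : Subgroup (∀ s : α, F s) where
  carrier := {g | ∀ t s : α, ∀ h : t ≤ s, ρ t s h (g s) = g t}
  one_mem' := by intro t s h; simp
  mul_mem' := by
    intro a b ha hb t s h
    simp only [Pi.mul_apply, map_mul, ha t s h, hb t s h]
  inv_mem' := by
    intro a ha t s h
    simp only [Pi.inv_apply, map_inv, ha t s h]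

/-- The pull-back of the diagram `F s₀ → lim_{D(s₀)∖T} F ← lim_{S∖T} F`. -/
def pullbackGroup (s₀ : α) (T : Set α) :
    Subgroup (F s₀ × ∀ p : {a : α // a ∉ T}, F p.1) where
  carrier := {x | (∀ q p : {a : α // a ∉ T}, ∀ h : (q : α) ≤ (p : α),
      ρ q p h (x.2 p) = x.2 q) ∧
    ∀ (t : α) (h : t ≤ s₀) (ht : t ∉ T), ρ t s₀ h x.1 = x.2 ⟨t, ht⟩}
  one_mem' := by constructor <;> intros <;> simp
  mul_mem' := by
    intro a b ha hb
    refine ⟨fun q p h => ?_, fun t h ht => ?_⟩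
    · simp only [Prod.snd_mul, Pi.mul_apply, map_mul, ha.1 q p h, hb.1 q p h]
    · simp only [Prod.fst_mul, Prod.snd_mul, Pi.mul_apply, map_mul,
        ha.2 t h ht, hb.2 t h ht]
  inv_mem' := by
    intro a ha
    refine ⟨fun q p h => ?_, fun t h ht => ?_⟩
    · simp only [Prod.snd_inv, Pi.inv_apply, map_inv, ha.1 q p h]
    · simp only [Prod.fst_inv, Prod.snd_inv, Pi.inv_apply, map_inv, ha.2 t h ht]

end

theorem limit_iso_pullback {α : Type*} [Fintype α] [PartialOrder α]
    (F : α → Type*) [∀ s, Group (F s)]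
    (ρ : ∀ t s : α, t ≤ s → (F s →* F t))
    (hρ_id : ∀ s : α, ρ s s le_rfl = MonoidHom.id (F s))
    (hρ_comp : ∀ (u t s : α) (h1 : u ≤ t) (h2 : t ≤ s),
      (ρ u t h1).comp (ρ t s h2) = ρ u s (h1.trans h2))
    (s₀ : α) (hs₀ : ∀ u : α, s₀ ≤ u → u = s₀)
    (T : Set α) (hs₀T : s₀ ∈ T)
    (hT : ∀ t ∈ T, t ≤ s₀ ∧ ∀ u : α, t ≤ u → u ≤ s₀) :
    ∃ e : fullLimit F ρ ≃* pullbackGroup F ρ s₀ T,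
      ∀ g : fullLimit F ρ,
        ((e g : F s₀ × ∀ p : {a : α // a ∉ T}, F p.1)).1 = (g : ∀ s, F s) s₀ ∧
        ∀ p : {a : α // a ∉ T},
          ((e g : F s₀ × ∀ p : {a : α // a ∉ T}, F p.1)).2 p = (g : ∀ s, F s) p.1 := by
  classical
  have hcomp : ∀ (u t s : α) (h1 : u ≤ t) (h2 : t ≤ s) (x : F s),
      ρ u t h1 (ρ t s h2 x) = ρ u s (h1.trans h2) x := by
    intro u t s h1 h2 x
    rw [← hρ_comp u t s h1 h2]; rfl
  -- forward map
  have fwd_mem : ∀ g : fullLimit F ρ,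
      ((g : ∀ s, F s) s₀, fun p : {a : α // a ∉ T} => (g : ∀ s, F s) p.1) ∈
        pullbackGroup F ρ s₀ T := by
    intro g
    refine ⟨fun q p h => g.2 q p h, fun t h ht => g.2 t s₀ h⟩
  -- inverse map
  let inv : pullbackGroup F ρ s₀ T → ∀ s : α, F s := fun x s =>
    if h : s ∈ T then ρ s s₀ (hT s h).1 x.1.1 else x.1.2 ⟨s, h⟩
  have inv_mem : ∀ x : pullbackGroup F ρ s₀ T, inv x ∈ fullLimit F ρ := by
    intro x t s h
    obtain ⟨hx1, hx2⟩ := x.2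
    simp only [inv]
    by_cases hs : s ∈ T
    · have hts : t ≤ s₀ := h.trans (hT s hs).1
      by_cases ht : t ∈ T
      · rw [dif_pos hs, dif_pos ht, hcomp]
      · rw [dif_pos hs, dif_neg ht, hcomp, hx2 t hts ht]
    · by_cases ht : t ∈ T
      · have hss : s ≤ s₀ := (hT t ht).2 s h
        rw [dif_neg hs, dif_pos ht, ← hx2 s hss hs, hcomp]
      · rw [dif_neg hs, dif_neg ht]
        exact hx1 ⟨t, ht⟩ ⟨s, hs⟩ h
  refine ⟨{ toFun := fun g => ⟨_, fwd_mem g⟩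
            invFun := fun x => ⟨inv x, inv_mem x⟩
            left_inv := ?_
            right_inv := ?_
            map_mul' := fun a b => rfl }, fun g => ⟨rfl, fun p => rfl⟩⟩
  · intro g
    ext s
    simp only [inv]
    by_cases hs : s ∈ T
    · rw [dif_pos hs]; exact g.2 s s₀ (hT s hs).1
    · rw [dif_neg hs]
  · intro x
    ext
    · simp only [inv, dif_pos hs₀T]
      have := hρ_id s₀
      calc ρ s₀ s₀ (hT s₀ hs₀T).1 x.1.1 = ρ s₀ s₀ le_rfl x.1.1 := rfl
        _ = x.1.1 := by rw [this]; rfl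
    · simp only [inv]
      rename_i p
      rw [dif_neg p.2]
end

section
/- Let G = (V,E) be a finite graph, s₀ a simplicial vertex, S = N(s₀) ∪ {s₀}, and S⁰ = { s ∈ S | every neighbor of s lies in S }. With X(H) = { z ∈ ℂ^H | z_i ≠ z_j for every edge {i,j} of H }, the commutative square of restriction maps X(G) → X(G \ S⁰), X(G) → X(S), X(S) → X(S \ S⁰), X(G \ S⁰) → X(S \ S⁰) is a pull-back square of topological spaces: the induced map X(G) → X(S) ×_{X(S\S⁰)} X(G\S⁰) is a homeomorphism. -/
theorem pullback_square_of_spaces {V : Type*} [Fintype V] (G : SimpleGraph V)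
    (s₀ : V) (hs₀ : G.IsSimplicialVertex s₀)
    (S S0 : Set V)
    (hS : S = insert s₀ (G.neighborSet s₀))
    (hS0 : S0 = {s ∈ S | ∀ t : V, G.Adj s t → t ∈ S}) :
    ∃ φ : ↥(arrComplement G) ≃ₜ
        ↥{p : ↥(arrComplement (G.induce S)) × ↥(arrComplement (G.induce S0ᶜ)) |
          ∀ (u : V) (hu : u ∈ S) (hu0 : u ∈ S0ᶜ), p.1.1 ⟨u, hu⟩ = p.2.1 ⟨u, hu0⟩},
      ∀ w : ↥(arrComplement G),
        ((φ w).1.1.1 = fun u : ↥S => w.1 u.1) ∧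
        ((φ w).1.2.1 = fun u : ↥(S0ᶜ) => w.1 u.1) := by
  classical
  have hsub : S0 ⊆ S := by intro u hu; rw [hS0] at hu; exact hu.1
  have hedge : ∀ ⦃i j : V⦄, G.Adj i j → i ∈ S0 → j ∈ S := by
    intro i j hij hi; rw [hS0] at hi; exact hi.2 j hij
  have mem1 : ∀ w : ↥(arrComplement G),
      (fun u : ↥S => w.1 u.1) ∈ arrComplement (G.induce S) := by
    intro w i j hij; exact w.2 hij
  have mem2 : ∀ w : ↥(arrComplement G),
      (fun u : ↥(S0ᶜ) => w.1 u.1) ∈ arrComplement (G.induce S0ᶜ) := by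
    intro w i j hij; exact w.2 hij
  let glue : (↥(arrComplement (G.induce S)) × ↥(arrComplement (G.induce S0ᶜ))) → V → ℂ :=
    fun p u => if h : u ∈ S0 then p.1.1 ⟨u, hsub h⟩ else p.2.1 ⟨u, h⟩
  have hglue : ∀ p : ↥{p : ↥(arrComplement (G.induce S)) × ↥(arrComplement (G.induce S0ᶜ)) |
          ∀ (u : V) (hu : u ∈ S) (hu0 : u ∈ S0ᶜ), p.1.1 ⟨u, hu⟩ = p.2.1 ⟨u, hu0⟩},
      glue p.1 ∈ arrComplement G := by
    rintro ⟨p, hp⟩ i j hij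
    by_cases hi : i ∈ S0 <;> by_cases hj : j ∈ S0 <;> simp only [glue]
    · rw [dif_pos hi, dif_pos hj]; exact p.1.2 hij
    · rw [dif_pos hi, dif_neg hj, ← hp j (hedge hij hi) hj]; exact p.1.2 hij
    · rw [dif_neg hi, dif_pos hj, ← hp i (hedge hij.symm hj) hi]; exact p.1.2 hij
    · rw [dif_neg hi, dif_neg hj]; exact p.2.2 hij
  refine ⟨Homeomorph.mk
    ⟨fun w => ⟨(⟨_, mem1 w⟩, ⟨_, mem2 w⟩), fun u hu hu0 => rfl⟩,
     fun p => ⟨glue p.1, hglue p⟩, ?_, ?_⟩ ?_ ?_, fun w => ⟨rfl, rfl⟩⟩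
  · intro w
    apply Subtype.ext
    funext u
    simp only [glue]; split_ifs <;> rfl
  · rintro ⟨⟨p1, p2⟩, hp⟩
    apply Subtype.ext
    ext : 1
    · apply Subtype.ext
      funext u
      by_cases h : u.1 ∈ S0 <;> simp only [glue]
      · rw [dif_pos h]
      · rw [dif_neg h]; exact (hp u.1 u.2 h).symm
    · apply Subtype.ext
      funext u
      simp only [glue]; rw [dif_neg u.2]
  · apply Continuous.subtype_mk
    apply Continuous.prodMk <;> apply Continuous.subtype_mk <;>
      exact continuous_pi fun u => (continuous_apply u.1).comp continuous_subtype_val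
  · apply Continuous.subtype_mk
    apply continuous_pi
    intro u
    by_cases h : u ∈ S0 <;> simp only [glue]
    · simp only [dif_pos h]; exact (continuous_apply _).comp
        (continuous_subtype_val.comp (continuous_fst.comp continuous_subtype_val))
    · simp only [dif_neg h]
      exact (continuous_apply _).comp
        (continuous_subtype_val.comp (continuous_snd.comp continuous_subtype_val))
end
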